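/- arXiv:1605.09046 — 4 statements merged into one kernel-verified Lean document; each statement's English description precedes it below -/
import Mathlib

section
/- Let n ≥ 1, let μ, σ ∈ ℝⁿ, let x, y ∈ ℝⁿ, and let g = (g₁,...,gₙ) be a random vector with independent coordinates, where g_i has the Gaussian distribution with mean μ_i and variance σ_i². Then E[cos(⟨g, x⟩) cos(⟨g, y⟩)] + E[sin(⟨g, x⟩) sin(⟨g, y⟩)] = exp(-(1/2) Σ_{i=1}^{n} σ_i² (x_i - y_i)²) · cos(⟨μ, x - y⟩). -/
/-!
Since `cos a cos b + sin a sin b = cos (a - b)`, the left-hand side is `E cos ⟨g, x - y⟩`.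
The variable `⟨g, x - y⟩` is a sum of independent Gaussians, hence Gaussian with mean
`⟨μ, x - y⟩` and variance `∑ σᵢ² (xᵢ - yᵢ)²`, and `E cos X` is the real part of the
characteristic function of `X` at `1`, which for `N(m, v)` is `exp (-v/2) cos m`.
-/

open MeasureTheory ProbabilityTheory
open scoped NNReal

section

variable {Ω : Type*} [MeasurableSpace Ω] {P : Measure Ω}

lemma integral_cos_mul_cos_add_integral_sin_mul_sin [IsFiniteMeasure P] {f h : Ω → ℝ}
    (hf : AEStronglyMeasurable f P) (hh : AEStronglyMeasurable h P) :
    (∫ ω, Real.cos (f ω) * Real.cos (h ω) ∂P) + (∫ ω, Real.sin (f ω) * Real.sin (h ω) ∂P) =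
      ∫ ω, Real.cos (f ω - h ω) ∂P := by
  have integrable_of_abs_le_one {u v : ℝ → ℝ} (hu : Continuous u) (hv : Continuous v)
      (hu₁ : ∀ t, |u t| ≤ 1) (hv₁ : ∀ t, |v t| ≤ 1) :
      Integrable (fun ω => u (f ω) * v (h ω)) P :=
    .of_bound ((hu.comp_aestronglyMeasurable hf).mul (hv.comp_aestronglyMeasurable hh)) 1
      (ae_of_all _ fun ω => by
        simpa [abs_mul] using mul_le_one₀ (hu₁ _) (abs_nonneg _) (hv₁ _))
  rw [← integral_add
    (integrable_of_abs_le_one Real.continuous_cos Real.continuous_cos Real.abs_cos_le_one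
      Real.abs_cos_le_one)
    (integrable_of_abs_le_one Real.continuous_sin Real.continuous_sin Real.abs_sin_le_one
      Real.abs_sin_le_one)]
  simp_rw [Real.cos_sub]

lemma re_charFun_eq_integral_cos {μ : Measure ℝ} [IsFiniteMeasure μ] (t : ℝ) :
    (charFun μ t).re = ∫ x, Real.cos (t * x) ∂μ := by
  have hint : Integrable (fun x : ℝ => Complex.exp ((t * x : ℝ) * Complex.I)) μ :=
    .of_bound (by fun_prop) 1 (ae_of_all _ fun x => (Complex.norm_exp_ofReal_mul_I _).le)
  rw [charFun_apply_real, ← RCLike.re_to_complex]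
  simp_rw [← Complex.ofReal_mul]
  rw [← integral_re hint]
  simp_rw [RCLike.re_to_complex, Complex.exp_ofReal_mul_I_re]

lemma integral_cos_mul_gaussianReal (m : ℝ) (v : ℝ≥0) (t : ℝ) :
    ∫ x, Real.cos (t * x) ∂gaussianReal m v = Real.exp (-(v * t ^ 2 / 2)) * Real.cos (t * m) := by
  have hexponent : (t * m * Complex.I - v * t ^ 2 / 2 : ℂ) =
      ((-(v * t ^ 2 / 2) : ℝ) : ℂ) + ((t * m : ℝ) : ℂ) * Complex.I := by
    push_cast; ring
  rw [← re_charFun_eq_integral_cos, charFun_gaussianReal, hexponent, Complex.exp_add,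
    ← Complex.ofReal_exp, Complex.re_ofReal_mul, Complex.exp_ofReal_mul_I_re]

lemma map_sum_eq_gaussianReal_of_iIndepFun {ι : Type*} [Fintype ι] [IsProbabilityMeasure P]
    {X : ι → Ω → ℝ} {m : ι → ℝ} {v : ι → ℝ≥0} (hX : iIndepFun X P) (mX : ∀ i, AEMeasurable (X i) P)
    (hlaw : ∀ i, P.map (X i) = gaussianReal (m i) (v i)) :
    P.map (fun ω => ∑ i, X i ω) = gaussianReal (∑ i, m i) (∑ i, v i) := by
  refine Measure.ext_of_charFun (funext fun t => ?_)
  rw [hX.charFun_map_fun_sum_eq_prod mX, Finset.prod_apply, charFun_gaussianReal]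
  simp_rw [hlaw, charFun_gaussianReal]
  rw [← Complex.exp_sum]
  push_cast
  simp only [Finset.sum_sub_distrib, Finset.mul_sum, Finset.sum_mul, Finset.sum_div]

end

theorem stmt4_general {Ω : Type*} [MeasurableSpace Ω] (P : Measure Ω) [IsProbabilityMeasure P]
    (n : ℕ) (μ σ x y : Fin n → ℝ) (g : Fin n → Ω → ℝ)
    (hmeas : ∀ i, Measurable (g i))
    (hindep : iIndepFun g P)
    (hlaw : ∀ i, Measure.map (g i) P = gaussianReal (μ i) (Real.toNNReal ((σ i) ^ 2))) :
    (∫ ω, Real.cos (∑ i, g i ω * x i) * Real.cos (∑ i, g i ω * y i) ∂P) +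
      (∫ ω, Real.sin (∑ i, g i ω * x i) * Real.sin (∑ i, g i ω * y i) ∂P) =
        Real.exp (-(1 / 2) * ∑ i, (σ i) ^ 2 * (x i - y i) ^ 2) *
          Real.cos (∑ i, μ i * (x i - y i)) := by
  have hdiff : ∀ ω, ∑ i, g i ω * x i - ∑ i, g i ω * y i = ∑ i, g i ω * (x i - y i) := fun ω => by
    simp only [mul_sub, Finset.sum_sub_distrib]
  have hlaw_mul : ∀ i, P.map (fun ω => g i ω * (x i - y i)) =
      gaussianReal (μ i * (x i - y i))
        (.mk ((x i - y i) ^ 2) (sq_nonneg _) * (σ i ^ 2).toNNReal) := fun i => by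
    rw [← Function.comp_def (· * (x i - y i)), ← Measure.map_map (by fun_prop) (hmeas i), hlaw i,
      gaussianReal_map_mul_const, mul_comm]
  have hindep_mul : iIndepFun (fun i ω => g i ω * (x i - y i)) P :=
    hindep.comp (fun i t => t * (x i - y i)) (fun i => by fun_prop)
  have hlaw_sum := map_sum_eq_gaussianReal_of_iIndepFun hindep_mul (fun i => by fun_prop) hlaw_mul
  rw [integral_cos_mul_cos_add_integral_sin_mul_sin (by fun_prop) (by fun_prop)]
  simp_rw [hdiff]
  rw [← integral_map (by fun_prop) (by fun_prop), hlaw_sum]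
  convert integral_cos_mul_gaussianReal _ _ 1 using 3
  · simp
  · push_cast [Real.coe_toNNReal _ (sq_nonneg _)]
    simp only [mul_comm ((x _ - y _) ^ 2)]
    ring
  · simp

/-- **PNG representation of the (shifted) Gaussian kernel.** If `g = (g₁,...,gₙ)` has
independent coordinates with `gᵢ ~ N(μᵢ, σᵢ²)`, then
`E[cos⟨g,x⟩cos⟨g,y⟩] + E[sin⟨g,x⟩sin⟨g,y⟩]
  = exp(-(1/2) ∑ i, σᵢ² (xᵢ-yᵢ)²) · cos(⟨μ, x-y⟩)`. -/
theorem stmt4 {Ω : Type*} [MeasurableSpace Ω] (P : Measure Ω) [IsProbabilityMeasure P]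
    (n : ℕ) (hn : 1 ≤ n) (μ σ x y : Fin n → ℝ) (g : Fin n → Ω → ℝ)
    (hmeas : ∀ i, Measurable (g i))
    (hindep : iIndepFun g P)
    (hlaw : ∀ i, Measure.map (g i) P = gaussianReal (μ i) (Real.toNNReal ((σ i) ^ 2))) :
    (∫ ω, Real.cos (∑ i, g i ω * x i) * Real.cos (∑ i, g i ω * y i) ∂P) +
      (∫ ω, Real.sin (∑ i, g i ω * x i) * Real.sin (∑ i, g i ω * y i) ∂P) =
        Real.exp (-(1 / 2) * ∑ i, (σ i) ^ 2 * (x i - y i) ^ 2) *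
          Real.cos (∑ i, μ i * (x i - y i)) :=
  stmt4_general P n μ σ x y g hmeas hindep hlaw
end

section
/- Let n ≥ 1 and let H ∈ ℝ^{n×n} be a matrix all of whose entries satisfy |H_{ij}| ≤ 1/√n. Let D be the random diagonal matrix whose diagonal entries are independent Rademacher random variables. Then for every x ∈ ℝⁿ with ‖x‖₂ = 1, P[‖HDx‖_∞ > log(n)/√n] ≤ 2n·exp(-log²(n)/8). In particular, the matrix HD₁ with H the L₂-normalized Hadamard matrix and D₁ a random diagonal ±1 matrix is (log(n), 2n·e^{-log²(n)/8})-balanced. -/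
/-!
Each coordinate of `HDx` is a Rademacher sum `∑ₖ Hᵢₖ xₖ εₖ`. A Rademacher variable has
moment generating function `cosh t ≤ exp (t² / 2)`, so by independence this sum is
sub-Gaussian with variance proxy `∑ₖ (Hᵢₖ xₖ)² ≤ 1 / n`, and the two-sided Chernoff bound gives
`P[|(HDx)ᵢ| ≥ log n / √n] ≤ 2 exp (-log² n / 2)`. A union bound over the `n` coordinates
finishes the proof.
-/

open MeasureTheory ProbabilityTheory Real
open scoped NNReal ENNReal

namespace ProbabilityTheory

noncomputable def rademacher : Measure ℝ :=
  (1 / 2 : ℝ≥0∞) • Measure.dirac 1 + (1 / 2 : ℝ≥0∞) • Measure.dirac (-1)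

lemma integrable_rademacher (f : ℝ → ℝ) : Integrable f rademacher :=
  .add_measure ((integrable_dirac enorm_lt_top).smul_measure (by simp))
    ((integrable_dirac enorm_lt_top).smul_measure (by simp))

lemma integral_rademacher (f : ℝ → ℝ) : ∫ x, f x ∂rademacher = (f 1 + f (-1)) / 2 := by
  rw [rademacher, integral_add_measure, integral_smul_measure, integral_smul_measure,
    integral_dirac, integral_dirac]
  · simp only [ENNReal.toReal_div, ENNReal.toReal_one, ENNReal.toReal_ofNat, smul_eq_mul]
    ring
  all_goals exact (integrable_dirac enorm_lt_top).smul_measure (by simp)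

lemma mgf_id_rademacher (t : ℝ) : mgf id rademacher t = cosh t := by
  simp only [mgf, id, integral_rademacher, mul_one, mul_neg, cosh_eq]

lemma hasSubgaussianMGF_id_rademacher : HasSubgaussianMGF id 1 rademacher where
  integrable_exp_mul _ := integrable_rademacher _
  mgf_le t := by simpa [mgf_id_rademacher] using cosh_le_exp_half_sq t

variable {Ω : Type*} [MeasurableSpace Ω] {μ : Measure Ω}

lemma HasSubgaussianMGF.of_map_eq_rademacher {X : Ω → ℝ} (hX : AEMeasurable X μ)
    (h : μ.map X = rademacher) : HasSubgaussianMGF X 1 μ :=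
  (HasSubgaussianMGF.id_map_iff hX).mp (h ▸ hasSubgaussianMGF_id_rademacher)

lemma HasSubgaussianMGF.mono {X : Ω → ℝ} {c c' : ℝ≥0} (h : HasSubgaussianMGF X c μ)
    (hc : c ≤ c') : HasSubgaussianMGF X c' μ where
  integrable_exp_mul := h.integrable_exp_mul
  mgf_le t := (h.mgf_le t).trans (exp_le_exp.mpr (by gcongr))

lemma HasSubgaussianMGF.sum_mul_of_iIndepFun {ι : Type*} {X : ι → Ω → ℝ}
    (h_indep : iIndepFun X μ) {c : ι → ℝ≥0} {s : Finset ι}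
    (h_subG : ∀ i ∈ s, HasSubgaussianMGF (X i) (c i) μ) (a : ι → ℝ) :
    HasSubgaussianMGF (fun ω ↦ ∑ i ∈ s, a i * X i ω)
      (∑ i ∈ s, ⟨a i ^ 2, sq_nonneg _⟩ * c i) μ :=
  sum_of_iIndepFun (h_indep.comp (fun i y ↦ a i * y) fun _ ↦ measurable_const_mul _)
    fun i hi ↦ (h_subG i hi).const_mul (a i)

lemma HasSubgaussianMGF.measureReal_le_abs_le {X : Ω → ℝ} {c : ℝ≥0}
    (h : HasSubgaussianMGF X c μ) {t : ℝ} (ht : 0 ≤ t) :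
    μ.real {ω | t ≤ |X ω|} ≤ 2 * exp (-t ^ 2 / (2 * c)) := by
  have h_split : {ω | t ≤ |X ω|} = {ω | t ≤ X ω} ∪ {ω | t ≤ (-X) ω} := by
    ext ω; simp [le_abs]
  calc μ.real {ω | t ≤ |X ω|}
      ≤ μ.real {ω | t ≤ X ω} + μ.real {ω | t ≤ (-X) ω} := h_split ▸ measureReal_union_le _ _
    _ ≤ exp (-t ^ 2 / (2 * c)) + exp (-t ^ 2 / (2 * c)) :=
      add_le_add (h.measure_ge_le ht) (h.neg.measure_ge_le ht)
    _ = 2 * exp (-t ^ 2 / (2 * c)) := by ring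

lemma measureReal_le_abs_sum_mul_le_of_map_eq_rademacher
    {ι : Type*} [Fintype ι] {ε : ι → Ω → ℝ} (hmeas : ∀ i, Measurable (ε i))
    (hindep : iIndepFun ε μ) (hlaw : ∀ i, μ.map (ε i) = rademacher) (a : ι → ℝ) {c : ℝ≥0}
    (hc : ∑ i, a i ^ 2 ≤ c) {t : ℝ} (ht : 0 ≤ t) :
    μ.real {ω | t ≤ |∑ i, a i * ε i ω|} ≤ 2 * exp (-t ^ 2 / (2 * c)) := by
  have h_subG : HasSubgaussianMGF (fun ω ↦ ∑ i, a i * ε i ω) c μ := by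
    refine (HasSubgaussianMGF.sum_mul_of_iIndepFun hindep
      (fun i _ ↦ .of_map_eq_rademacher (hmeas i).aemeasurable (hlaw i)) a).mono ?_
    rw [← NNReal.coe_le_coe, NNReal.coe_sum]
    exact (Finset.sum_congr rfl fun i _ ↦ mul_one (a i ^ 2)).trans_le hc
  exact h_subG.measureReal_le_abs_le ht

end ProbabilityTheory

lemma sum_sq_mul_le_of_abs_le {ι : Type*} [Fintype ι] {a : ι → ℝ} {r : ℝ}
    (ha : ∀ i, |a i| ≤ r) (x : ι → ℝ) : ∑ i, (a i * x i) ^ 2 ≤ r ^ 2 * ∑ i, x i ^ 2 := by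
  rw [Finset.mul_sum]
  refine Finset.sum_le_sum fun i _ ↦ ?_
  rw [mul_pow, ← sq_abs (a i)]
  exact mul_le_mul_of_nonneg_right (pow_le_pow_left₀ (abs_nonneg _) (ha i) 2) (sq_nonneg _)

lemma measureReal_log_div_sqrt_le_abs_mulVec_le {Ω : Type*} [MeasurableSpace Ω]
    {P : Measure Ω} {n : ℕ} {H : Matrix (Fin n) (Fin n) ℝ} (hH : ∀ i j, |H i j| ≤ 1 / √n)
    {x : Fin n → ℝ} (hx : ∑ k, x k ^ 2 = 1) {ε : Fin n → Ω → ℝ} (hmeas : ∀ k, Measurable (ε k))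
    (hindep : iIndepFun ε P) (hlaw : ∀ k, P.map (ε k) = rademacher) (i : Fin n) :
    P.real {ω | log n / √n ≤ |H.mulVec (fun k ↦ ε k ω * x k) i|} ≤ 2 * exp (-log n ^ 2 / 2) := by
  have hn : (0 : ℝ) < n := Nat.cast_pos.mpr i.pos
  have hσ : ∑ k, (H i k * x k) ^ 2 ≤ ((n : ℝ≥0)⁻¹ : ℝ≥0) :=
    calc ∑ k, (H i k * x k) ^ 2 ≤ (1 / √n) ^ 2 * ∑ k, x k ^ 2 :=
          sum_sq_mul_le_of_abs_le (hH i) x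
      _ = _ := by rw [hx, div_pow, sq_sqrt hn.le]; simp
  have h_exponent : -(log n / √n) ^ 2 / (2 * ((n : ℝ≥0)⁻¹ : ℝ≥0)) = -log n ^ 2 / 2 := by
    simp only [NNReal.coe_inv, NNReal.coe_natCast, div_pow, sq_sqrt hn.le]
    field_simp
  have h_mulVec : ∀ ω, H.mulVec (fun k ↦ ε k ω * x k) i = ∑ k, H i k * x k * ε k ω := by
    intro ω
    simp only [Matrix.mulVec, dotProduct]
    exact Finset.sum_congr rfl fun k _ ↦ by ring
  simp_rw [h_mulVec, ← h_exponent]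
  exact measureReal_le_abs_sum_mul_le_of_map_eq_rademacher hmeas hindep hlaw _ hσ
    (div_nonneg (log_natCast_nonneg n) (sqrt_nonneg _))

theorem stmt8_general {Ω : Type*} [MeasurableSpace Ω] (P : Measure Ω) [IsProbabilityMeasure P]
    (n : ℕ) (H : Matrix (Fin n) (Fin n) ℝ)
    (hH : ∀ i j, |H i j| ≤ 1 / Real.sqrt n)
    (x : Fin n → ℝ) (hx : ∑ k, (x k) ^ 2 = 1)
    (ε : Fin n → Ω → ℝ)
    (hmeas : ∀ k, Measurable (ε k))
    (hindep : iIndepFun ε P)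
    (hlaw : ∀ k, Measure.map (ε k) P =
      (1 / 2 : ENNReal) • Measure.dirac (1 : ℝ) +
        (1 / 2 : ENNReal) • Measure.dirac (-1 : ℝ)) :
    P {ω | ∃ i, Real.log n / Real.sqrt n <
        |Matrix.mulVec H (fun k => ε k ω * x k) i|} ≤
      ENNReal.ofReal (2 * n * Real.exp (-(Real.log n) ^ 2 / 8)) := by
  set t := log n / √n
  have h_row : ∀ i, P.real {ω | t ≤ |H.mulVec (fun k ↦ ε k ω * x k) i|} ≤
      2 * exp (-log n ^ 2 / 8) := fun i ↦
    (measureReal_log_div_sqrt_le_abs_mulVec_le hH hx hmeas hindep hlaw i).trans <|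
      mul_le_mul_of_nonneg_left (exp_le_exp.mpr (by linarith [sq_nonneg (log n)])) zero_le_two
  calc P {ω | ∃ i, t < |H.mulVec (fun k ↦ ε k ω * x k) i|}
      ≤ P (⋃ i, {ω | t ≤ |H.mulVec (fun k ↦ ε k ω * x k) i|}) :=
        measure_mono fun ω ⟨i, hi⟩ ↦ Set.mem_iUnion.mpr ⟨i, hi.le⟩
    _ = ENNReal.ofReal (P.real (⋃ i, {ω | t ≤ |H.mulVec (fun k ↦ ε k ω * x k) i|})) :=
        (ofReal_measureReal).symm
    _ ≤ ENNReal.ofReal (∑ i, P.real {ω | t ≤ |H.mulVec (fun k ↦ ε k ω * x k) i|}) :=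
        ENNReal.ofReal_le_ofReal (measureReal_iUnion_fintype_le _)
    _ ≤ ENNReal.ofReal (2 * n * exp (-log n ^ 2 / 8)) := by
        refine ENNReal.ofReal_le_ofReal ((Finset.sum_le_sum fun i _ ↦ h_row i).trans_eq ?_)
        simp only [Finset.sum_const, Finset.card_univ, Fintype.card_fin, nsmul_eq_mul]
        ring

/-- **The randomized Hadamard-type matrix `HD` is `(log n, 2n e^{-log²(n)/8})`-balanced.**
If all entries of `H` satisfy `|Hᵢⱼ| ≤ 1/√n` and `D` is a random diagonal matrix with
independent Rademacher diagonal entries `ε₁,...,εₙ`, then for every unit vector `x`,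
`P[‖HDx‖_∞ > log(n)/√n] ≤ 2n exp(-log²(n)/8)`. -/
theorem stmt8 {Ω : Type*} [MeasurableSpace Ω] (P : Measure Ω) [IsProbabilityMeasure P]
    (n : ℕ) (hn : 1 ≤ n) (H : Matrix (Fin n) (Fin n) ℝ)
    (hH : ∀ i j, |H i j| ≤ 1 / Real.sqrt n)
    (x : Fin n → ℝ) (hx : ∑ k, (x k) ^ 2 = 1)
    (ε : Fin n → Ω → ℝ)
    (hmeas : ∀ k, Measurable (ε k))
    (hindep : iIndepFun ε P)
    (hlaw : ∀ k, Measure.map (ε k) P =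
      (1 / 2 : ENNReal) • Measure.dirac (1 : ℝ) +
        (1 / 2 : ENNReal) • Measure.dirac (-1 : ℝ)) :
    P {ω | ∃ i, Real.log n / Real.sqrt n <
        |Matrix.mulVec H (fun k => ε k ω * x k) i|} ≤
      ENNReal.ofReal (2 * n * Real.exp (-(Real.log n) ^ 2 / 8)) :=
  stmt8_general P n H hH x hx ε hmeas hindep hlaw
end

section
/- Let n ≥ 1 and let H ∈ ℝ^{n×n} be an orthogonal matrix (HᵀH = I) all of whose entries have absolute value exactly 1/√n. For each i ∈ {1,...,n}, define W^i = √n · D_{h_i} · H, where D_{h_i} is the diagonal matrix whose diagonal is the i-th row of H. Then: (a) every column of every W^i has Euclidean norm 1; and (b) for all i ≠ j and every l ∈ {1,...,n}, the l-th column of W^i is orthogonal to the l-th column of W^j, i.e. the diagonal of (W^j)ᵀW^i is zero. -/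
open Matrix

/-!
Entrywise, `Wⁱ k l = √n · H i k · H k l`, and `(H k l)² = 1/n` cancels the scaling `(√n)²`. So
the inner product of the `l`-th columns of `Wⁱ` and `Wʲ` is `∑ₖ H i k · H j k = (H Hᵀ) i j`,
which is `δᵢⱼ` since `H` is orthogonal.
-/

theorem Matrix.sum_diagonal_row_mul_apply_mul {ι α : Type*} [Fintype ι] [DecidableEq ι]
    [CommSemiring α] (H : Matrix ι ι α) {c : α} (hsq : ∀ k l, H k l ^ 2 = c) (i j l : ι) :
    ∑ k, (diagonal (H i) * H) k l * (diagonal (H j) * H) k l = c * (H * Hᵀ) i j := by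
  simp only [diagonal_mul, transpose_apply, mul_apply (M := H), Finset.mul_sum]
  refine Finset.sum_congr rfl fun k _ => ?_
  rw [← hsq k l]
  ring

theorem Real.sq_eq_one_div_of_abs_eq_one_div_sqrt {x : ℝ} {n : ℕ} (hx : |x| = 1 / Real.sqrt n) :
    x ^ 2 = 1 / n := by
  rw [← sq_abs, hx, div_pow, one_pow, Real.sq_sqrt n.cast_nonneg]

theorem stmt9_general (n : ℕ) (H : Matrix (Fin n) (Fin n) ℝ)
    (horth : Hᵀ * H = 1) (hentry : ∀ i j, |H i j| = 1 / Real.sqrt n)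
    (W : Fin n → Matrix (Fin n) (Fin n) ℝ)
    (hW : ∀ i, W i = (Real.sqrt n) • (Matrix.diagonal (H i) * H)) :
    (∀ i l, ∑ k, (W i k l) ^ 2 = 1) ∧
      (∀ i j, i ≠ j → ∀ l, ∑ k, W i k l * W j k l = 0) := by
  have hsq i j : H i j ^ 2 = 1 / n := Real.sq_eq_one_div_of_abs_eq_one_div_sqrt (hentry i j)
  have gram i j l : ∑ k, W i k l * W j k l = (1 : Matrix (Fin n) (Fin n) ℝ) i j := by
    have hn : (n : ℝ) ≠ 0 := Nat.cast_ne_zero.mpr l.pos.ne'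
    calc ∑ k, W i k l * W j k l
        = Real.sqrt n ^ 2 * ∑ k, (diagonal (H i) * H) k l * (diagonal (H j) * H) k l := by
          simp only [hW, Matrix.smul_apply, smul_eq_mul, Finset.mul_sum]
          exact Finset.sum_congr rfl fun k _ => by ring
      _ = (H * Hᵀ) i j := by
          rw [sum_diagonal_row_mul_apply_mul H hsq, Real.sq_sqrt n.cast_nonneg, ← mul_assoc,
            mul_one_div_cancel hn, one_mul]
      _ = (1 : Matrix (Fin n) (Fin n) ℝ) i j := by rw [mul_eq_one_comm.mp horth]
  refine ⟨fun i l => ?_, fun i j hij l => ?_⟩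
  · simpa only [sq, one_apply_eq] using gram i i l
  · simpa only [one_apply_ne hij] using gram i j l

/-- **Smoothness properties (columns) of the Hadamard-based `W`-matrices.** Let `H` be an
orthogonal `n × n` matrix all of whose entries have absolute value `1/√n`, and set
`Wⁱ = √n · D_{hᵢ} · H` where `hᵢ` is the `i`-th row of `H`. Then every column of every
`Wⁱ` has unit Euclidean norm, and for `i ≠ j` corresponding columns of `Wⁱ` and `Wʲ` are
orthogonal (the diagonal of `(Wʲ)ᵀWⁱ` vanishes). -/
theorem stmt9 (n : ℕ) (hn : 1 ≤ n) (H : Matrix (Fin n) (Fin n) ℝ)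
    (horth : Hᵀ * H = 1) (hentry : ∀ i j, |H i j| = 1 / Real.sqrt n)
    (W : Fin n → Matrix (Fin n) (Fin n) ℝ)
    (hW : ∀ i, W i = (Real.sqrt n) • (Matrix.diagonal (H i) * H)) :
    (∀ i l, ∑ k, (W i k l) ^ 2 = 1) ∧
      (∀ i j, i ≠ j → ∀ l, ∑ k, W i k l * W j k l = 0) :=
  stmt9_general n H horth hentry W hW
end

section
/- Let n ≥ 1 and let H ∈ ℝ^{n×n} be an orthogonal matrix (HᵀH = I) all of whose entries have absolute value exactly 1/√n. For each i define W^i = √n · D_{h_i} · H, where D_{h_i} is the diagonal matrix whose diagonal is the i-th row of H. Then for all i, j ∈ {1,...,n}, the matrix A^{i,j} := (W^j)ᵀW^i = n·Hᵀ D_{h_j} D_{h_i} H is an orthogonal matrix; consequently its Frobenius norm equals √n and its operator (spectral) norm equals 1. -/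
/-!
Each `Wⁱ = (√n · D_{hᵢ}) · H` is a product of two orthogonal matrices: `H` itself, and the
diagonal matrix `√n · D_{hᵢ}`, whose entries are `±1` because `|H i k| = 1/√n`. Hence
`A^{i,j} = (Wʲ)ᵀ Wⁱ` is orthogonal. An orthogonal matrix has Frobenius norm `√n`, since
`‖A‖_F² = tr (AᵀA) = tr 1`, and operator norm `1`, since it is a unitary element of the
C⋆-algebra of operators on `ℝⁿ`.
-/

open Matrix

namespace Matrix

variable {n : Type*} [Fintype n] [DecidableEq n]

theorem mem_unitaryGroup_iff_transpose_mul_self {R : Type*} [CommRing R] [StarRing R]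
    [TrivialStar R] {A : Matrix n n R} : A ∈ unitaryGroup n R ↔ Aᵀ * A = 1 := by
  rw [mem_unitaryGroup_iff', star_eq_conjTranspose, conjTranspose_eq_transpose_of_trivial]

theorem diagonal_mem_unitaryGroup {R : Type*} [CommRing R] [StarRing R] {d : n → R}
    (hd : ∀ k, star (d k) * d k = 1) : diagonal d ∈ unitaryGroup n R := by
  rw [mem_unitaryGroup_iff', star_eq_conjTranspose, diagonal_conjTranspose,
    diagonal_mul_diagonal, ← diagonal_one]
  exact congrArg diagonal (funext hd)

theorem sum_sum_sq_eq_card_of_transpose_mul_self_eq_one {R : Type*} [CommSemiring R]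
    {A : Matrix n n R} (hA : Aᵀ * A = 1) : ∑ k, ∑ l, A k l ^ 2 = Fintype.card n := by
  have htrace : ∑ l, ∑ k, A k l * A k l = Fintype.card n := by
    rw [← trace_one, ← hA]
    simp only [trace, diag_apply, mul_apply, transpose_apply]
  rw [Finset.sum_comm, ← htrace]
  simp only [sq]

theorem norm_toEuclideanCLM_of_mem_unitaryGroup {𝕜 : Type*} [RCLike 𝕜] [Nonempty n]
    {U : Matrix n n 𝕜} (hU : U ∈ unitaryGroup n 𝕜) : ‖toEuclideanCLM (𝕜 := 𝕜) U‖ = 1 :=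
  CStarRing.norm_of_mem_unitary (Unitary.map_mem _ hU)

end Matrix

theorem sqrt_mul_mul_self_eq_one_of_abs_eq {c x : ℝ} (hc : 0 < c) (hx : |x| = 1 / √c) :
    (√c * x) * (√c * x) = 1 := by
  have habs : |√c * x| = 1 := by
    rw [abs_mul, hx, abs_of_pos (Real.sqrt_pos.2 hc)]
    field_simp
  rw [← abs_mul_abs_self, habs, one_mul]

/-- **Smoothness parameters `Λ_F = √n`, `Λ₂ = 1` for the Hadamard-based construction.**
Let `H` be an orthogonal `n × n` matrix all of whose entries have absolute value `1/√n`,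
and set `Wⁱ = √n · D_{hᵢ} · H`. Then for all `i, j`, the matrix
`A^{i,j} = (Wʲ)ᵀWⁱ = n·HᵀD_{hⱼ}D_{hᵢ}H` is orthogonal; its Frobenius norm equals `√n`
and its operator (spectral) norm equals `1`. -/
theorem stmt10 (n : ℕ) (hn : 1 ≤ n) (H : Matrix (Fin n) (Fin n) ℝ)
    (horth : Hᵀ * H = 1) (hentry : ∀ i j, |H i j| = 1 / Real.sqrt n)
    (W : Fin n → Matrix (Fin n) (Fin n) ℝ)
    (hW : ∀ i, W i = (Real.sqrt n) • (Matrix.diagonal (H i) * H))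
    (A : Fin n → Fin n → Matrix (Fin n) (Fin n) ℝ)
    (hA : ∀ i j, A i j = (W j)ᵀ * W i) :
    ∀ i j,
      A i j = (n : ℝ) • (Hᵀ * Matrix.diagonal (H j) * (Matrix.diagonal (H i) * H)) ∧
      (A i j)ᵀ * A i j = 1 ∧
      Real.sqrt (∑ k, ∑ l, (A i j k l) ^ 2) = Real.sqrt n ∧
      ‖Matrix.toEuclideanCLM (𝕜 := ℝ) (A i j)‖ = 1 := by
  have hn_pos : (0 : ℝ) < n := by exact_mod_cast hn
  have hW_mem : ∀ i, W i ∈ unitaryGroup (Fin n) ℝ := fun i => by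
    rw [hW, ← smul_mul, ← diagonal_smul]
    refine mul_mem (diagonal_mem_unitaryGroup fun k => ?_)
      (mem_unitaryGroup_iff_transpose_mul_self.2 horth)
    rw [star_trivial]
    exact sqrt_mul_mul_self_eq_one_of_abs_eq hn_pos (hentry i k)
  intro i j
  have hA_mem : A i j ∈ unitaryGroup (Fin n) ℝ := by
    rw [hA, ← conjTranspose_eq_transpose_of_trivial, ← star_eq_conjTranspose]
    exact mul_mem (Unitary.star_mem (hW_mem j)) (hW_mem i)
  have hA_orth := mem_unitaryGroup_iff_transpose_mul_self.1 hA_mem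
  have : Nonempty (Fin n) := Fin.pos_iff_nonempty.mp hn
  refine ⟨?_, hA_orth, ?_, norm_toEuclideanCLM_of_mem_unitaryGroup hA_mem⟩
  · rw [hA, hW, hW, transpose_smul, transpose_mul, diagonal_transpose, smul_mul_assoc,
      mul_smul_comm, smul_smul, Real.mul_self_sqrt hn_pos.le]
  · rw [sum_sum_sq_eq_card_of_transpose_mul_self_eq_one hA_orth, Fintype.card_fin]
end
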